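/- arXiv:0804.0867 — 2 statements merged into one kernel-verified Lean document; each statement's English description precedes it below -/
import Mathlib

section
/- A Poisson random variable with mean -N·log(1-π) stochastically dominates a Binomial random variable with parameters N and π, for any integer N ≥ 1 and 0 ≤ π < 1. -/
/-!
Write `cdf f t` for the mass that `f : ℕ → ℝ` puts below `t`, so that `g` stochastically
dominates `f` iff `cdf g ≤ cdf f`. Domination is preserved by convolution: compare `f ∗ g` with
`f ∗ g'`, commute, and compare `g' ∗ f` with `g' ∗ f'`. Since `Poi(a) ∗ Poi(b) = Poi(a + b)` and
`Bin(N + 1, p) = Bin(1, p) ∗ Bin(N, p)`, induction on `N` reduces the theorem to `N = 1`. There,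
with `p = 1 - e^{-μ}`, both `Poi(μ)` and `Bin(1, p)` put mass `e^{-μ}` at `0`, and `Bin(1, p)` has
no mass above `1`.
-/

open Finset

namespace Dominance

open Real

def cdf (f : ℕ → ℝ) (t : ℕ) : ℝ := ∑ i ∈ range t, f i

def conv (f g : ℕ → ℝ) (n : ℕ) : ℝ := ∑ p ∈ antidiagonal n, f p.1 * g p.2

noncomputable def poissonPMF (a : ℝ) (n : ℕ) : ℝ := exp (-a) * a ^ n / n.factorial

def binomialPMF (p : ℝ) (N i : ℕ) : ℝ := N.choose i * p ^ i * (1 - p) ^ (N - i)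

lemma conv_comm (f g : ℕ → ℝ) : conv f g = conv g f := by
  ext n
  rw [conv, conv, ← Nat.sum_antidiagonal_swap]
  simp only [Prod.fst_swap, Prod.snd_swap, mul_comm]

lemma cdf_conv (f g : ℕ → ℝ) (t : ℕ) :
    cdf (conv f g) t = ∑ i ∈ range t, f i * cdf g (t - i) := by
  induction t with
  | zero => simp [cdf]
  | succ t ih =>
    have hshift : ∀ i ∈ range (t + 1),
        f i * cdf g (t + 1 - i) = f i * cdf g (t - i) + f i * g (t - i) := by
      intro i hi
      rw [Nat.sub_add_comm (Nat.lt_succ_iff.mp (mem_range.mp hi)), cdf, sum_range_succ, mul_add]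
      rfl
    rw [cdf, sum_range_succ, ← cdf, ih, sum_congr rfl hshift, sum_add_distrib, sum_range_succ _ t,
      conv, Nat.sum_antidiagonal_eq_sum_range_succ (fun i j => f i * g j)]
    simp [cdf]

lemma cdf_conv_le_cdf_conv {f f' g g' : ℕ → ℝ} (hf : ∀ t, cdf f t ≤ cdf f' t)
    (hg : ∀ t, cdf g t ≤ cdf g' t) (hf₀ : ∀ i, 0 ≤ f i) (hg'₀ : ∀ i, 0 ≤ g' i) (t : ℕ) :
    cdf (conv f g) t ≤ cdf (conv f' g') t :=
  calc cdf (conv f g) t = ∑ i ∈ range t, f i * cdf g (t - i) := cdf_conv f g t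
    _ ≤ ∑ i ∈ range t, f i * cdf g' (t - i) :=
      sum_le_sum fun i _ => mul_le_mul_of_nonneg_left (hg _) (hf₀ i)
    _ = ∑ j ∈ range t, g' j * cdf f (t - j) := by rw [← cdf_conv, conv_comm, cdf_conv]
    _ ≤ ∑ j ∈ range t, g' j * cdf f' (t - j) :=
      sum_le_sum fun j _ => mul_le_mul_of_nonneg_left (hf _) (hg'₀ j)
    _ = cdf (conv f' g') t := by rw [← cdf_conv, conv_comm]

lemma tsum_ite_le_eq_tsum_sub_cdf {f : ℕ → ℝ} (hf : Summable f) (t : ℕ) :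
    ∑' i, (if t ≤ i then f i else 0) = ∑' i, f i - cdf f t := by
  set g : ℕ → ℝ := fun i => if t ≤ i then f i else 0
  have htail : Summable fun i => f (i + t) := (summable_nat_add_iff t).mpr hf
  have hg : ∀ i, g (i + t) = f (i + t) := fun i => if_pos (Nat.le_add_left t i)
  rw [← htail.sum_add_tsum_nat_add', ← (htail.congr fun i => (hg i).symm).sum_add_tsum_nat_add',
    sum_eq_zero fun i hi => if_neg (by simpa using hi), tsum_congr hg, cdf]
  ring

section Poisson

lemma poissonPMF_nonneg {a : ℝ} (ha : 0 ≤ a) (n : ℕ) : 0 ≤ poissonPMF a n := by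
  unfold poissonPMF; positivity

lemma hasSum_poissonPMF (a : ℝ) : HasSum (poissonPMF a) 1 := by
  have h := (NormedSpace.expSeries_div_hasSum_exp a).mul_left (exp (-a))
  rw [← congrFun exp_eq_exp_ℝ a, ← exp_add, neg_add_cancel, exp_zero] at h
  have hpmf : poissonPMF a = fun n => exp (-a) * (a ^ n / n.factorial) :=
    funext fun n => mul_div_assoc _ _ _
  rwa [hpmf]

lemma cdf_poissonPMF_le_one {a : ℝ} (ha : 0 ≤ a) (t : ℕ) : cdf (poissonPMF a) t ≤ 1 :=
  (hasSum_poissonPMF a).tsum_eq ▸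
    (hasSum_poissonPMF a).summable.sum_le_tsum _ fun i _ => poissonPMF_nonneg ha i

lemma poissonPMF_add (a b : ℝ) : poissonPMF (a + b) = conv (poissonPMF a) (poissonPMF b) := by
  ext n
  rw [poissonPMF, conv, (Commute.all a b).add_pow', mul_sum, sum_div]
  refine sum_congr rfl fun p hp => ?_
  obtain ⟨i, j⟩ := p
  rw [HasAntidiagonal.mem_antidiagonal] at hp
  subst hp
  have hfac : ((i + j).factorial : ℝ) = (i + j).choose i * i.factorial * j.factorial := by
    rw [Nat.choose_symm_add]
    exact_mod_cast (Nat.add_choose_mul_factorial_mul_factorial i j).symm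
  have hchoose : ((i + j).choose i : ℝ) ≠ 0 :=
    Nat.cast_ne_zero.mpr (Nat.choose_pos (by omega)).ne'
  simp only [poissonPMF, nsmul_eq_mul, neg_add, exp_add, hfac]
  field_simp

lemma poissonPMF_zero : poissonPMF 0 = Pi.single 0 1 := by
  ext n
  cases n <;> simp [poissonPMF]

end Poisson

section Binomial

variable {p : ℝ}

lemma binomialPMF_nonneg (h0 : 0 ≤ p) (h1 : p ≤ 1) (N i : ℕ) : 0 ≤ binomialPMF p N i := by
  have : 0 ≤ 1 - p := sub_nonneg.mpr h1
  unfold binomialPMF; positivity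

lemma binomialPMF_eq_zero_of_lt {N i : ℕ} (h : N < i) : binomialPMF p N i = 0 := by
  simp [binomialPMF, Nat.choose_eq_zero_of_lt h]

lemma sum_range_binomialPMF (p : ℝ) (N : ℕ) : ∑ i ∈ range (N + 1), binomialPMF p N i = 1 := by
  have h := add_pow p (1 - p) N
  rw [add_sub_cancel, one_pow] at h
  rw [h]
  exact sum_congr rfl fun i _ => by unfold binomialPMF; ring

lemma binomialPMF_zero (p : ℝ) : binomialPMF p 0 = Pi.single 0 1 := by
  ext (_ | n) <;> simp [binomialPMF]

lemma binomialPMF_succ_succ (p : ℝ) (N n : ℕ) :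
    binomialPMF p (N + 1) (n + 1) = (1 - p) * binomialPMF p N (n + 1) + p * binomialPMF p N n := by
  simp only [binomialPMF, Nat.choose_succ_succ', Nat.succ_sub_succ, Nat.cast_add]
  rcases Nat.lt_or_ge N (n + 1) with h | h
  · rw [Nat.choose_eq_zero_of_lt h, Nat.cast_zero]
    ring
  · rw [show N - n = N - (n + 1) + 1 by omega]
    ring

lemma binomialPMF_succ (p : ℝ) (N : ℕ) :
    binomialPMF p (N + 1) = conv (binomialPMF p 1) (binomialPMF p N) := by
  ext (_ | n)
  · simp [conv, binomialPMF, pow_succ, mul_comm]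
  · rw [binomialPMF_succ_succ, conv, Nat.sum_antidiagonal_succ]
    rcases n with _ | n
    · simp [binomialPMF]
    · rw [Nat.sum_antidiagonal_succ]
      simp [binomialPMF, Nat.choose_eq_zero_of_lt]

lemma cdf_binomialPMF_of_le (p : ℝ) {N t : ℕ} (h : N + 1 ≤ t) : cdf (binomialPMF p N) t = 1 := by
  rw [cdf, ← sum_range_add_sum_Ico _ h, sum_range_binomialPMF,
    sum_eq_zero fun i hi => binomialPMF_eq_zero_of_lt (mem_Ico.mp hi).1, add_zero]

lemma cdf_binomialPMF_add_sum_Icc (p : ℝ) (N t : ℕ) :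
    cdf (binomialPMF p N) t + ∑ i ∈ Icc t N, binomialPMF p N i = 1 := by
  rcases le_or_gt t (N + 1) with h | h
  · rw [← Ico_add_one_right_eq_Icc, cdf, sum_range_add_sum_Ico _ h, sum_range_binomialPMF]
  · rw [Icc_eq_empty (by omega), sum_empty, add_zero, cdf_binomialPMF_of_le p h.le]

end Binomial

lemma cdf_poissonPMF_le_cdf_binomialPMF_one {μ : ℝ} (hμ : 0 ≤ μ) (t : ℕ) :
    cdf (poissonPMF μ) t ≤ cdf (binomialPMF (1 - exp (-μ)) 1) t := by
  rcases t with _ | _ | t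
  · simp [cdf]
  · simp [cdf, poissonPMF, binomialPMF]
  · rw [cdf_binomialPMF_of_le _ (by omega)]
    exact cdf_poissonPMF_le_one hμ _

theorem cdf_poissonPMF_le_cdf_binomialPMF {μ : ℝ} (hμ : 0 ≤ μ) (N t : ℕ) :
    cdf (poissonPMF (N * μ)) t ≤ cdf (binomialPMF (1 - exp (-μ)) N) t := by
  induction N generalizing t with
  | zero => rw [Nat.cast_zero, zero_mul, poissonPMF_zero, binomialPMF_zero]
  | succ N ih =>
    have hp₀ : 0 ≤ 1 - exp (-μ) := sub_nonneg.mpr (exp_le_one_iff.mpr (neg_nonpos.mpr hμ))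
    have hp₁ : 1 - exp (-μ) ≤ 1 := sub_le_self _ (exp_pos _).le
    rw [Nat.cast_succ, add_one_mul, add_comm, poissonPMF_add, binomialPMF_succ]
    exact cdf_conv_le_cdf_conv (cdf_poissonPMF_le_cdf_binomialPMF_one hμ) ih
      (poissonPMF_nonneg hμ) (binomialPMF_nonneg hp₀ hp₁ N) t

end Dominance

open Dominance in
theorem stmt_1_general (N : ℕ) (π : ℝ) (h0 : 0 ≤ π) (h1 : π < 1) (t : ℕ) :
    ∑ i ∈ Finset.Icc t N, (N.choose i : ℝ) * π ^ i * (1 - π) ^ (N - i) ≤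
      ∑' i : ℕ, if t ≤ i then
        Real.exp (-(-(N : ℝ) * Real.log (1 - π))) *
          (-(N : ℝ) * Real.log (1 - π)) ^ i / (Nat.factorial i) else 0 := by
  set μ := -Real.log (1 - π) with hμ
  have hμ₀ : 0 ≤ μ := neg_nonneg.mpr (Real.log_nonpos (by linarith) (by linarith))
  have hπ : 1 - Real.exp (-μ) = π := by
    rw [hμ, neg_neg, Real.exp_log (by linarith), sub_sub_cancel]
  have hdom := cdf_poissonPMF_le_cdf_binomialPMF hμ₀ N t
  rw [hπ] at hdom
  have hbinomial := cdf_binomialPMF_add_sum_Icc π N t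
  have hpoisson := tsum_ite_le_eq_tsum_sub_cdf (hasSum_poissonPMF (N * μ)).summable t
  rw [(hasSum_poissonPMF _).tsum_eq] at hpoisson
  rw [show -(N : ℝ) * Real.log (1 - π) = N * μ by ring]
  change ∑ i ∈ Icc t N, binomialPMF π N i ≤ ∑' i, if t ≤ i then poissonPMF (N * μ) i else 0
  linarith

/-- A Poisson random variable with mean `-N·log(1-π)` stochastically dominates a
Binomial random variable with parameters `N` and `π`, for `N ≥ 1` and `0 ≤ π < 1`:
for every `t`, the binomial upper tail is at most the Poisson upper tail. -/
theorem stmt_1 (N : ℕ) (hN : 1 ≤ N) (π : ℝ) (h0 : 0 ≤ π) (h1 : π < 1) (t : ℕ) :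
    ∑ i ∈ Finset.Icc t N, (N.choose i : ℝ) * π ^ i * (1 - π) ^ (N - i) ≤
      ∑' i : ℕ, if t ≤ i then
        Real.exp (-(-(N : ℝ) * Real.log (1 - π))) *
          (-(N : ℝ) * Real.log (1 - π)) ^ i / (Nat.factorial i) else 0 :=
  stmt_1_general N π h0 h1 t
end

section
/- Harris's lemma: in a finite product probability space {0,1}^E with each coordinate independently 1 with some probability, if A is an increasing event and D is a decreasing event, then P(A ∩ D) ≤ P(A)·P(D). -/
/-!
A product measure on a product of chains is log-modular on singletons: coordinatewise,
`{min (a i) (b i), max (a i) (b i)} = {a i, b i}`. The FKG inequality then makes any two increasing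
events positively correlated. Applied to `A` and the increasing event `Dᶜ`, this gives
`P(A ∩ Dᶜ) ≥ P(A) (1 - P(D))`, which is the claim after subtracting from `P(A)`.
-/

open MeasureTheory

/-- The product Bernoulli measure on `{0,1}^E`: each coordinate is independently
`true` with probability `p e`. -/
noncomputable def bernoulliProduct {E : Type*} [Fintype E] (p : E → ENNReal)
    (hp : ∀ e, p e ≤ 1) : Measure (E → Bool) :=
  Measure.pi fun e => (PMF.bernoulli (p e).toNNReal
    (by simpa using ENNReal.toNNReal_mono ENNReal.one_ne_top (hp e))).toMeasure

open Set

namespace MeasureTheory.Measure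

theorem pi_singleton_mul_pi_singleton {ι : Type*} [Fintype ι] {β : ι → Type*}
    [∀ i, LinearOrder (β i)] [∀ i, MeasurableSpace (β i)] (ν : ∀ i, Measure (β i))
    [∀ i, SigmaFinite (ν i)] (a b : ∀ i, β i) :
    Measure.pi ν {a} * Measure.pi ν {b} = Measure.pi ν {a ⊓ b} * Measure.pi ν {a ⊔ b} := by
  simp only [pi_singleton, ← Finset.prod_mul_distrib, Pi.inf_apply, Pi.sup_apply]
  refine Finset.prod_congr rfl fun i _ => ?_
  rcases le_total (a i) (b i) with h | h <;> simp [h, mul_comm]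

end MeasureTheory.Measure

theorem IsUpperSet.monotone_indicator_one {α : Type*} [Preorder α] {A : Set α}
    (hA : IsUpperSet A) : Monotone (A.indicator (1 : α → ℝ)) := by
  intro a b hab
  by_cases ha : a ∈ A
  · simp [ha, hA hab ha]
  · simp [ha, indicator_nonneg]

theorem sum_measureReal_singleton_mul_indicator_one {α : Type*} [Fintype α] [MeasurableSpace α]
    [MeasurableSingletonClass α] {μ : Measure α} [IsFiniteMeasure μ] (A : Set α) :
    ∑ a, μ.real {a} * A.indicator 1 a = μ.real A := by
  rw [← integral_indicator_one (toFinite A).measurableSet,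
    integral_fintype .of_finite]
  simp

section Correlation

variable {α : Type*} [DistribLattice α] [Finite α] [MeasurableSpace α]
  [MeasurableSingletonClass α] {μ : Measure α}

theorem IsUpperSet.measureReal_mul_le_univ_mul_inter [IsFiniteMeasure μ]
    (hμ : ∀ a b, μ.real {a} * μ.real {b} ≤ μ.real {a ⊓ b} * μ.real {a ⊔ b})
    {A B : Set α} (hA : IsUpperSet A) (hB : IsUpperSet B) :
    μ.real A * μ.real B ≤ μ.real univ * μ.real (A ∩ B) := by
  have := Fintype.ofFinite α
  have h := fkg (A.indicator 1) (B.indicator 1) (fun a => μ.real {a})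
    (fun _ => measureReal_nonneg) (indicator_nonneg fun _ _ => zero_le_one)
    (indicator_nonneg fun _ _ => zero_le_one) hA.monotone_indicator_one
    hB.monotone_indicator_one hμ
  simpa only [← Pi.mul_apply (A.indicator 1), ← inter_indicator_one,
    sum_measureReal_singleton_mul_indicator_one, sum_measureReal_singleton, Finset.coe_univ]
    using h

theorem IsUpperSet.measureReal_inter_le_mul_of_isLowerSet [IsProbabilityMeasure μ]
    (hμ : ∀ a b, μ.real {a} * μ.real {b} ≤ μ.real {a ⊓ b} * μ.real {a ⊔ b})
    {A D : Set α} (hA : IsUpperSet A) (hD : IsLowerSet D) :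
    μ.real (A ∩ D) ≤ μ.real A * μ.real D := by
  have hDmeas : MeasurableSet D := (toFinite D).measurableSet
  have hcorr := hA.measureReal_mul_le_univ_mul_inter hμ hD.compl
  rw [probReal_univ, one_mul, probReal_compl_eq_one_sub hDmeas, ← sdiff_eq, mul_one_sub] at hcorr
  linarith [measureReal_inter_add_sdiff (μ := μ) (s := A) hDmeas]

end Correlation

instance {E : Type*} [Fintype E] (p : E → ENNReal) (hp : ∀ e, p e ≤ 1) :
    IsProbabilityMeasure (bernoulliProduct p hp) := by
  unfold bernoulliProduct
  infer_instance

theorem stmt_13_general {E : Type*} [Fintype E] (p : E → ENNReal) (hp : ∀ e, p e ≤ 1)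
    (A D : Set (E → Bool))
    (hA : ∀ ω ω' : E → Bool, ω ≤ ω' → ω ∈ A → ω' ∈ A)
    (hD : ∀ ω ω' : E → Bool, ω ≤ ω' → ω' ∈ D → ω ∈ D) :
    bernoulliProduct p hp (A ∩ D) ≤ bernoulliProduct p hp A * bernoulliProduct p hp D := by
  set μ := bernoulliProduct p hp
  have hμ : ∀ a b, μ.real {a} * μ.real {b} ≤ μ.real {a ⊓ b} * μ.real {a ⊔ b} := fun a b => by
    simp only [measureReal_def, ← ENNReal.toReal_mul, μ, bernoulliProduct]
    rw [Measure.pi_singleton_mul_pi_singleton]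
  have h := IsUpperSet.measureReal_inter_le_mul_of_isLowerSet hμ (fun a b => hA a b)
    (fun a b hba => hD b a hba)
  rwa [← ENNReal.toReal_le_toReal (by finiteness) (by finiteness), ENNReal.toReal_mul]

/-- Harris's lemma: in the finite product probability space `{0,1}^E` with each
coordinate independently `1` with some probability, if `A` is an increasing event
and `D` is a decreasing event, then `P(A ∩ D) ≤ P(A)·P(D)`. -/
theorem stmt_13 {E : Type*} [Fintype E] (p : E → ENNReal) (hp : ∀ e, p e ≤ 1)
    (A D : Set (E → Bool)) (hAmeas : MeasurableSet A) (hDmeas : MeasurableSet D)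
    (hA : ∀ ω ω' : E → Bool, ω ≤ ω' → ω ∈ A → ω' ∈ A)
    (hD : ∀ ω ω' : E → Bool, ω ≤ ω' → ω' ∈ D → ω ∈ D) :
    bernoulliProduct p hp (A ∩ D) ≤ bernoulliProduct p hp A * bernoulliProduct p hp D :=
  stmt_13_general p hp A D hA hD
end
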